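/- Let t > 0 with t ≤ 1. For odd n ≥ 3, every graph of the form H + K̄_{(n+1)/2}, where H is an arbitrary graph on (n−1)/2 vertices and + denotes the join, is not Hamiltonian and satisfies σ₂ ≤ 2n/(t'+1) − 2 where t' = (n−1)/(n+1) is an upper bound on its toughness. -/

import Mathlib

open SimpleGraph

/-- The number of components of `G − S`. -/
noncomputable def numComp {V : Type*} (G : SimpleGraph V) (S : Set V) : ℕ :=
  Nat.card ((G.induce Sᶜ).ConnectedComponent)

/-- `G` is `t`-tough: `|S| ≥ t · c(G − S)` for every `S` with `c(G − S) ≥ 2`. -/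
def Tough {V : Type*} [Fintype V] (t : ℝ) (G : SimpleGraph V) : Prop :=
  ∀ S : Finset V, 2 ≤ numComp G ↑S → t * (numComp G ↑S : ℝ) ≤ (S.card : ℝ)

/-- The degree of a vertex. -/
noncomputable def deg {V : Type*} [Fintype V] (G : SimpleGraph V) (v : V) : ℕ :=
  Nat.card (G.neighborSet v)

/-- The join of two graphs: all edges added between the two vertex sets. -/
def graphJoin {α β : Type*} (G : SimpleGraph α) (H : SimpleGraph β) :
    SimpleGraph (α ⊕ β) where
  Adj x y :=
    match x, y with
    | Sum.inl a, Sum.inl b => G.Adj a b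
    | Sum.inr a, Sum.inr b => H.Adj a b
    | _, _ => True
  symm := ⟨by rintro (a | a) (b | b) h <;> simp_all <;> exact h.symm⟩
  loopless := ⟨by rintro (a | a) h <;> simp_all⟩

/-!
The vertices of `K̄_{(n+1)/2}` form an independent set `I` with `|I| = |Iᶜ| + 1`. A Hamiltonian
cycle is a spanning 2-regular subgraph, and counting its edges between `I` and `Iᶜ` from both
sides gives `2|I| ≤ 2|Iᶜ|`, so the join is not Hamiltonian. Deleting `Iᶜ` leaves `|I|` isolated
vertices, which bounds the toughness by `|Iᶜ| / |I|`. Two vertices of `I` are nonadjacent and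
both have degree `(n - 1)/2`, while `2n/(t' + 1) - 2 = n - 1`.
-/

open Finset

namespace SimpleGraph

variable {V : Type*} {G : SimpleGraph V}

theorem IsIndepSet.sum_degree_le_sum_degree_compl [Fintype V] [DecidableEq V]
    [DecidableRel G.Adj] {I : Finset V} (hI : G.IsIndepSet I) :
    ∑ v ∈ I, G.degree v ≤ ∑ w ∈ Iᶜ, G.degree w :=
  calc ∑ v ∈ I, G.degree v = ∑ v ∈ I, #(Iᶜ.bipartiteAbove G.Adj v) := by
        refine sum_congr rfl fun v hv => congrArg card ?_
        ext w
        simp only [mem_neighborFinset, bipartiteAbove, mem_filter, mem_compl, iff_and_self]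
        exact fun hvw hw => hI hv hw hvw.ne hvw
    _ = ∑ w ∈ Iᶜ, #(I.bipartiteBelow G.Adj w) :=
        sum_card_bipartiteAbove_eq_sum_card_bipartiteBelow _
    _ ≤ ∑ w ∈ Iᶜ, G.degree w := sum_le_sum fun w _ => card_le_card fun v hv => by
        simp only [bipartiteBelow, mem_filter] at hv
        simpa using hv.2.symm

theorem Walk.IsCycle.degree_spanningCoe_toSubgraph {u v : V} {p : G.Walk u u} (hp : p.IsCycle)
    (hv : v ∈ p.support) [Fintype (p.toSubgraph.spanningCoe.neighborSet v)] :
    p.toSubgraph.spanningCoe.degree v = 2 := by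
  rw [← card_neighborSet_eq_degree, ← Nat.card_eq_fintype_card, Nat.card_coe_set_eq]
  exact hp.ncard_neighborSet_toSubgraph_eq_two hv

theorem IsHamiltonian.card_le_card_compl_of_isIndepSet [Fintype V] [DecidableEq V]
    (hG : G.IsHamiltonian) (hV : Fintype.card V ≠ 1) {I : Finset V} (hI : G.IsIndepSet I) :
    #I ≤ #Iᶜ := by
  classical
  obtain ⟨_, p, hp⟩ := hG hV
  have key := IsIndepSet.sum_degree_le_sum_degree_compl (G := p.toSubgraph.spanningCoe)
    fun v hv w hw hvw h => hI hv hw hvw (p.toSubgraph.spanningCoe_le h)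
  simp only [hp.isCycle.degree_spanningCoe_toSubgraph (hp.mem_support _), sum_const,
    smul_eq_mul] at key
  omega

end SimpleGraph

section

variable {V : Type*} {G : SimpleGraph V}

theorem numComp_compl_of_isIndepSet {I : Set V} (hI : G.IsIndepSet I) :
    numComp G Iᶜ = Nat.card I := by
  have hbot : G.induce I = ⊥ := by
    ext v w
    simpa using fun h => hI v.2 w.2 (G.ne_of_adj h) h
  rw [numComp, compl_compl, hbot]
  refine (Nat.card_eq_of_bijective _ ⟨fun v w h => ?_, Quot.mk_surjective⟩).symm
  exact reachable_bot.mp (ConnectedComponent.exact h)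

theorem Tough.mul_card_le_card_compl_of_isIndepSet [Fintype V] [DecidableEq V] {s : ℝ}
    (hs : Tough s G) {I : Finset V} (hI : G.IsIndepSet I) (hI2 : 2 ≤ #I) :
    s * #I ≤ #Iᶜ := by
  have hc : numComp G ↑Iᶜ = #I := by
    rw [coe_compl, numComp_compl_of_isIndepSet hI, Nat.card_coe_set_eq, Set.ncard_coe_finset]
  have htough := hs Iᶜ (hc ▸ hI2)
  rwa [hc] at htough

theorem deg_bot [Fintype V] (v : V) : deg (⊥ : SimpleGraph V) v = 0 := by
  simp [deg]

end

theorem deg_graphJoin_inr {α β : Type*} [Fintype α] [Fintype β] (G : SimpleGraph α)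
    (H : SimpleGraph β) (b : β) :
    deg (graphJoin G H) (Sum.inr b) = Fintype.card α + deg H b := by
  rw [deg, deg, Nat.card_congr Equiv.subtypeSum, Nat.card_sum]
  congr 1
  simp [graphJoin]

theorem isIndepSet_range_inr_graphJoin_bot {α β : Type*} (G : SimpleGraph α) :
    (graphJoin G (⊥ : SimpleGraph β)).IsIndepSet (Set.range Sum.inr) := by
  rintro _ ⟨a, rfl⟩ _ ⟨b, rfl⟩ _
  exact id

theorem extremal_family_general
    (n : ℕ) (hn : 3 ≤ n)
    (H : SimpleGraph (Fin ((n - 1) / 2))) :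
    ∀ G : SimpleGraph (Fin ((n - 1) / 2) ⊕ Fin ((n + 1) / 2)),
    G = graphJoin H (⊥ : SimpleGraph (Fin ((n + 1) / 2))) →
      ¬ G.IsHamiltonian ∧
      (∃ u v, u ≠ v ∧ ¬ G.Adj u v ∧
        (deg G u : ℝ) + (deg G v : ℝ) ≤
          2 * (n : ℝ) / (((n : ℝ) - 1) / ((n : ℝ) + 1) + 1) - 2) ∧
      (∀ s : ℝ, Tough s G → s ≤ ((n : ℝ) - 1) / ((n : ℝ) + 1)) := by
  rintro G rfl
  have hk : (n + 1) / 2 = (n - 1) / 2 + 1 := by omega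
  have hmn : 2 * (((n - 1) / 2 : ℕ) : ℝ) + 1 ≤ n := by
    exact_mod_cast (by omega : 2 * ((n - 1) / 2) + 1 ≤ n)
  let I : Finset (Fin ((n - 1) / 2) ⊕ Fin ((n + 1) / 2)) := univ.map .inr
  have hI : (graphJoin H ⊥).IsIndepSet (I : Set (Fin ((n - 1) / 2) ⊕ Fin ((n + 1) / 2))) := by
    simpa [I] using isIndepSet_range_inr_graphJoin_bot (β := Fin ((n + 1) / 2)) H
  have hIcard : #I = (n + 1) / 2 := by simp [I]
  have hIcompl : #Iᶜ = (n - 1) / 2 := by simp [card_compl, hIcard]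
  refine ⟨fun hG => ?_, ⟨.inr ⟨0, by omega⟩, .inr ⟨1, by omega⟩, by simp, id, ?_⟩, fun s hs => ?_⟩
  · have hcard := hG.card_le_card_compl_of_isIndepSet (by simp; omega) hI
    omega
  · have hsum : ((n : ℝ) - 1) / (n + 1) + 1 = 2 * n / (n + 1) := by
      field_simp
      ring
    rw [hsum, div_div_cancel₀ (by positivity)]
    simp only [deg_graphJoin_inr, deg_bot, Fintype.card_fin, add_zero]
    linarith
  · have htough := hs.mul_card_le_card_compl_of_isIndepSet hI (by omega)
    rw [hIcard, hIcompl, hk, Nat.cast_succ] at htough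
    rw [le_div_iff₀ (by positivity)]
    nlinarith

/-- Members of the extremal family H_{(n−1)/2} + K̄_{(n+1)/2} are
non-hamiltonian and have σ₂ ≤ 2n/(t'+1) − 2 where t' = (n−1)/(n+1) bounds
their toughness from above. -/
theorem extremal_family (t : ℝ) (ht0 : 0 < t) (ht1 : t ≤ 1)
    (n : ℕ) (hodd : Odd n) (hn : 3 ≤ n)
    (H : SimpleGraph (Fin ((n - 1) / 2))) :
    ∀ G : SimpleGraph (Fin ((n - 1) / 2) ⊕ Fin ((n + 1) / 2)),
    G = graphJoin H (⊥ : SimpleGraph (Fin ((n + 1) / 2))) →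
      ¬ G.IsHamiltonian ∧
      (∃ u v, u ≠ v ∧ ¬ G.Adj u v ∧
        (deg G u : ℝ) + (deg G v : ℝ) ≤
          2 * (n : ℝ) / (((n : ℝ) - 1) / ((n : ℝ) + 1) + 1) - 2) ∧
      (∀ s : ℝ, Tough s G → s ≤ ((n : ℝ) - 1) / ((n : ℝ) + 1)) :=
  extremal_family_general n hn H
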